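/- ∫₀^∞ √[8]{(x² + 8x + 8 − 4(2+x)√(1+x)) / x^{11}} dx = 4 Γ(1/4)² / (3 √(2−√2) √π). -/

import Mathlib

/-!
Since `x² + 8x + 8 − 4(2+x)√(1+x) = (√(1+x) − 1)⁴`, the integrand is
`(√(1+x) − 1)^{1/2} x^{−11/8}`. The substitution `x = 4t/(1−t)²`, `t ∈ (0,1)`, rationalises the
root, `√(1+x) = (1+t)/(1−t)`, and turns the integral into
`2^{−1/4} ∫₀¹ (1+t) t^{−7/8} (1−t)^{−3/4} dt = 2^{−1/4} (B(1/8,1/4) + B(9/8,1/4))`.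
Legendre duplication at `1/8` and Euler reflection at `3/8` then express `Γ(1/8)` through
`Γ(1/4)` and `Γ(3/8)`, with `sin(3π/8) = cos(π/8) = √(2+√2)/2`.
-/

open Real MeasureTheory Set

section Beta

lemma ofReal_rpow_mul_one_sub_rpow {t : ℝ} (ht : t ∈ Ioo 0 1) (a b : ℝ) :
    ((t ^ (a - 1) * (1 - t) ^ (b - 1) : ℝ) : ℂ) =
      (t : ℂ) ^ ((a : ℂ) - 1) * (1 - (t : ℂ)) ^ ((b : ℂ) - 1) := by
  push_cast
  rw [Complex.ofReal_cpow ht.1.le, Complex.ofReal_cpow (sub_nonneg.2 ht.2.le)]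
  push_cast
  rfl

variable {a b : ℝ}

lemma integrableOn_rpow_mul_one_sub_rpow (ha : 0 < a) (hb : 0 < b) :
    IntegrableOn (fun t : ℝ => t ^ (a - 1) * (1 - t) ^ (b - 1)) (Ioo 0 1) := by
  have hC : IntegrableOn (fun t : ℝ => (t : ℂ) ^ ((a : ℂ) - 1) * (1 - (t : ℂ)) ^ ((b : ℂ) - 1))
      (Ioo 0 1) :=
    ((intervalIntegrable_iff_integrableOn_Ioc_of_le zero_le_one).1
      (Complex.betaIntegral_convergent (by simpa) (by simpa))).mono_set Ioo_subset_Ioc_self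
  have hR : IntegrableOn (fun t : ℝ => ((t ^ (a - 1) * (1 - t) ^ (b - 1) : ℝ) : ℂ)) (Ioo 0 1) :=
    hC.congr_fun (fun t ht => (ofReal_rpow_mul_one_sub_rpow ht a b).symm) measurableSet_Ioo
  simpa [IntegrableOn] using hR.re

lemma integral_rpow_mul_one_sub_rpow (ha : 0 < a) (hb : 0 < b) :
    ∫ t in Ioo (0 : ℝ) 1, t ^ (a - 1) * (1 - t) ^ (b - 1) = Gamma a * Gamma b / Gamma (a + b) := by
  have hbeta : Complex.betaIntegral a b =
      ((∫ t in Ioo (0 : ℝ) 1, t ^ (a - 1) * (1 - t) ^ (b - 1) : ℝ) : ℂ) := by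
    rw [Complex.betaIntegral, intervalIntegral.integral_of_le zero_le_one,
      integral_Ioc_eq_integral_Ioo,
      setIntegral_congr_fun measurableSet_Ioo
        (fun t ht => (ofReal_rpow_mul_one_sub_rpow ht a b).symm)]
    exact integral_ofReal
  have h := Complex.betaIntegral_eq_Gamma_mul_div a b (by simpa) (by simpa)
  rw [hbeta, ← Complex.ofReal_add, Complex.Gamma_ofReal, Complex.Gamma_ofReal,
    Complex.Gamma_ofReal] at h
  exact_mod_cast h

lemma integral_one_add_mul_rpow_mul_one_sub_rpow (ha : 0 < a) (hb : 0 < b) :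
    ∫ t in Ioo (0 : ℝ) 1, (1 + t) * t ^ (a - 1) * (1 - t) ^ (b - 1) =
      Gamma a * Gamma b / Gamma (a + b) * ((2 * a + b) / (a + b)) := by
  have hsplit : EqOn (fun t : ℝ => (1 + t) * t ^ (a - 1) * (1 - t) ^ (b - 1))
      (fun t => t ^ (a - 1) * (1 - t) ^ (b - 1) + t ^ (a + 1 - 1) * (1 - t) ^ (b - 1))
      (Ioo 0 1) := fun t ht => by
    simp only [add_sub_cancel_right, rpow_sub_one ht.1.ne']
    field_simp [ht.1.ne']
  rw [setIntegral_congr_fun measurableSet_Ioo hsplit,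
    integral_add (integrableOn_rpow_mul_one_sub_rpow ha hb)
      (integrableOn_rpow_mul_one_sub_rpow (by linarith) hb),
    integral_rpow_mul_one_sub_rpow ha hb, integral_rpow_mul_one_sub_rpow (by linarith) hb,
    add_right_comm, Gamma_add_one ha.ne', Gamma_add_one (by positivity)]
  have : Gamma (a + b) ≠ 0 := (Gamma_pos_of_pos (by positivity)).ne'
  field_simp
  ring

end Beta

lemma sqrt_two_lt_two : √2 < 2 := by
  rw [sqrt_lt' two_pos]
  norm_num

lemma Gamma_one_div_eight_mul_sqrt :
    Gamma (1 / 8) * (√(2 - √2) * √π) = 2 ^ (1 / 4 : ℝ) * Gamma (1 / 4) * Gamma (3 / 8) := by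
  have hdup : Gamma (1 / 8) * Gamma (5 / 8) = Gamma (1 / 4) * 2 ^ (3 / 4 : ℝ) * √π := by
    have := Gamma_mul_Gamma_add_half (1 / 8)
    norm_num at this
    exact this
  have hrefl : Gamma (3 / 8) * Gamma (5 / 8) * √(2 + √2) = 2 * π := by
    have h := Gamma_mul_Gamma_one_sub (3 / 8)
    rw [show π * (3 / 8) = π / 2 - π / 8 by ring, sin_pi_div_two_sub, cos_pi_div_eight] at h
    norm_num at h
    rw [h]
    field_simp
  have hpow : (2 : ℝ) ^ (3 / 4 : ℝ) = 2 ^ (1 / 4 : ℝ) * √2 := by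
    rw [sqrt_eq_rpow, ← rpow_add two_pos]
    norm_num
  have hsqrt : √(2 - √2) * √(2 + √2) * √2 = 2 := by
    have h2 : 0 ≤ 2 - √2 := by linarith [sqrt_two_lt_two]
    rw [← sqrt_mul h2, ← sqrt_mul (mul_nonneg h2 (by positivity)),
      show (2 - √2) * (2 + √2) * 2 = 2 ^ 2 by linear_combination -2 * sq_sqrt zero_le_two]
    exact sqrt_sq zero_le_two
  have h5 : Gamma (5 / 8) ≠ 0 := (Gamma_pos_of_pos (by norm_num)).ne'
  have hs : 0 < √(2 + √2) := by positivity
  have hpi : √π ^ 2 = π := sq_sqrt pi_pos.le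
  apply mul_right_cancel₀ (mul_ne_zero h5 hs.ne')
  linear_combination (√(2 - √2) * √π * √(2 + √2)) * hdup
    - 2 ^ (1 / 4 : ℝ) * Gamma (1 / 4) * hrefl
    + Gamma (1 / 4) * √(2 - √2) * √(2 + √2) * π * hpow
    + Gamma (1 / 4) * 2 ^ (1 / 4 : ℝ) * π * hsqrt
    + √(2 - √2) * √(2 + √2) * Gamma (1 / 4) * 2 ^ (3 / 4 : ℝ) * hpi

lemma sq_add_eight_mul_add_eight_sub_mul_sqrt {x : ℝ} (hx : -1 ≤ x) :
    x ^ 2 + 8 * x + 8 - 4 * (2 + x) * √(1 + x) = (√(1 + x) - 1) ^ 4 := by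
  have hs : √(1 + x) ^ 2 = 1 + x := sq_sqrt (by linarith)
  linear_combination (-√(1 + x) ^ 2 + 4 * √(1 + x) - 7 - x) * hs

lemma rpow_one_div_eight_eq_sqrt_sub_one_rpow_div_rpow {x : ℝ} (hx : 0 < x) :
    ((x ^ 2 + 8 * x + 8 - 4 * (2 + x) * √(1 + x)) / x ^ 11) ^ ((1 : ℝ) / 8) =
      (√(1 + x) - 1) ^ (1 / 2 : ℝ) / x ^ (11 / 8 : ℝ) := by
  have hs : 0 ≤ √(1 + x) - 1 := by
    rw [sub_nonneg, one_le_sqrt]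
    linarith
  rw [sq_add_eight_mul_add_eight_sub_mul_sqrt (by linarith),
    div_rpow (by positivity) (by positivity), ← rpow_natCast _ 4, ← rpow_mul hs,
    ← rpow_natCast x 11, ← rpow_mul hx.le]
  norm_num

section Substitution

noncomputable def rationalizingSubst (t : ℝ) : ℝ := 4 * t / (1 - t) ^ 2

lemma sqrt_one_add_rationalizingSubst {t : ℝ} (ht : t ∈ Ioo 0 1) :
    √(1 + rationalizingSubst t) = (1 + t) / (1 - t) := by
  have hu : 0 < 1 - t := sub_pos.2 ht.2
  rw [rationalizingSubst, show 1 + 4 * t / (1 - t) ^ 2 = ((1 + t) / (1 - t)) ^ 2 by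
    field_simp; ring]
  exact sqrt_sq (div_pos (by linarith [ht.1]) hu).le

lemma image_rationalizingSubst_Ioo : rationalizingSubst '' Ioo 0 1 = Ioi 0 := by
  refine Subset.antisymm ?_ fun y (hy : 0 < y) => ?_
  · rintro _ ⟨t, ht, rfl⟩
    exact div_pos (by linarith [ht.1]) (pow_pos (sub_pos.2 ht.2) 2)
  · set s := √(1 + y)
    have hs : s ^ 2 = 1 + y := sq_sqrt (by linarith)
    have hs1 : 1 < s := by
      rw [lt_sqrt zero_le_one]
      linarith
    refine ⟨(s - 1) / (s + 1), ⟨div_pos (by linarith) (by linarith), ?_⟩, ?_⟩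
    · rw [div_lt_one (by linarith)]
      linarith
    · have : s + 1 ≠ 0 := by linarith
      rw [rationalizingSubst]
      field_simp
      linear_combination 4 * hs

lemma injOn_rationalizingSubst : InjOn rationalizingSubst (Ioo 0 1) := by
  rintro a ⟨ha0, ha1⟩ b ⟨hb0, hb1⟩ h
  have ha : 1 - a ≠ 0 := by linarith
  have hb : 1 - b ≠ 0 := by linarith
  simp only [rationalizingSubst] at h
  field_simp at h
  have key : (a - b) * (1 - a * b) = 0 := by linear_combination h
  rcases mul_eq_zero.1 key with h' | h'
  · linarith
  · nlinarith

lemma hasDerivAt_rationalizingSubst {t : ℝ} (ht : t ≠ 1) :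
    HasDerivAt rationalizingSubst (4 * (1 + t) / (1 - t) ^ 3) t := by
  have hu : 1 - t ≠ 0 := sub_ne_zero.2 ht.symm
  refine (((hasDerivAt_id' t).const_mul 4).div (((hasDerivAt_id' t).const_sub 1).pow 2)
    (pow_ne_zero 2 hu)).congr_deriv ?_
  simp only [Pi.pow_apply]
  field_simp
  ring

end Substitution

lemma abs_deriv_smul_integrand_rationalizingSubst {t : ℝ} (ht : t ∈ Ioo 0 1) :
    |4 * (1 + t) / (1 - t) ^ 3| •
        ((√(1 + rationalizingSubst t) - 1) ^ (1 / 2 : ℝ) / rationalizingSubst t ^ (11 / 8 : ℝ)) =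
      2 ^ (-1 / 4 : ℝ) * ((1 + t) * t ^ (1 / 8 - 1 : ℝ) * (1 - t) ^ (1 / 4 - 1 : ℝ)) := by
  obtain ⟨ht0, ht1⟩ := ht
  have hu : 0 < 1 - t := sub_pos.2 ht1
  have hroot : (1 + t) / (1 - t) - 1 = 2 * t / (1 - t) := by
    field_simp
    ring
  rw [sqrt_one_add_rationalizingSubst ⟨ht0, ht1⟩, hroot, rationalizingSubst, smul_eq_mul,
    abs_of_pos (by positivity)]
  refine log_injOn_pos (by simp only [mem_Ioi]; positivity) (by simp only [mem_Ioi]; positivity) ?_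
  have h4 : log 4 = 2 * log 2 := by
    rw [show (4 : ℝ) = 2 ^ 2 by norm_num, log_pow]
    norm_num
  simp (disch := positivity) only [log_mul, log_div, log_rpow, log_pow, h4]
  ring

lemma two_rpow_neg_one_div_four_mul_beta_eq :
    2 ^ (-1 / 4 : ℝ) * (Gamma (1 / 8) * Gamma (1 / 4) / Gamma (3 / 8) * (4 / 3)) =
      4 * Gamma (1 / 4) ^ 2 / (3 * √(2 - √2) * √π) := by
  have h2 : (2 : ℝ) ^ (-(1 / 4) : ℝ) * 2 ^ (1 / 4 : ℝ) = 1 := by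
    rw [← rpow_add two_pos]
    norm_num
  have h3 : Gamma (3 / 8) ≠ 0 := (Gamma_pos_of_pos (by norm_num)).ne'
  have hs : √(2 - √2) ≠ 0 := (sqrt_pos.2 (by linarith [sqrt_two_lt_two])).ne'
  have hpi : √π ≠ 0 := (sqrt_pos.2 pi_pos).ne'
  field_simp
  linear_combination 2 ^ (-(1 / 4) : ℝ) * Gamma_one_div_eight_mul_sqrt
    + Gamma (1 / 4) * Gamma (3 / 8) * h2

theorem stmt_7 :
    ∫ x in Set.Ioi (0 : ℝ),
        ((x ^ 2 + 8 * x + 8 - 4 * (2 + x) * Real.sqrt (1 + x)) / x ^ 11) ^ ((1 : ℝ) / 8) =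
      4 * Real.Gamma (1 / 4) ^ 2 / (3 * Real.sqrt (2 - Real.sqrt 2) * Real.sqrt π) := by
  have hsubst := integral_image_eq_integral_abs_deriv_smul measurableSet_Ioo
    (fun t ht => (hasDerivAt_rationalizingSubst ht.2.ne).hasDerivWithinAt)
    injOn_rationalizingSubst fun x => (√(1 + x) - 1) ^ (1 / 2 : ℝ) / x ^ (11 / 8 : ℝ)
  rw [image_rationalizingSubst_Ioo] at hsubst
  calc _ = ∫ x in Ioi 0, (√(1 + x) - 1) ^ (1 / 2 : ℝ) / x ^ (11 / 8 : ℝ) :=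
        setIntegral_congr_fun measurableSet_Ioi fun x hx =>
          rpow_one_div_eight_eq_sqrt_sub_one_rpow_div_rpow hx
    _ = 2 ^ (-1 / 4 : ℝ) *
          ∫ t in Ioo (0 : ℝ) 1, (1 + t) * t ^ (1 / 8 - 1 : ℝ) * (1 - t) ^ (1 / 4 - 1 : ℝ) := by
        rw [hsubst, ← integral_const_mul]
        exact setIntegral_congr_fun measurableSet_Ioo fun t ht =>
          abs_deriv_smul_integrand_rationalizingSubst ht
    _ = 2 ^ (-1 / 4 : ℝ) * (Gamma (1 / 8) * Gamma (1 / 4) / Gamma (3 / 8) * (4 / 3)) := by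
        rw [integral_one_add_mul_rpow_mul_one_sub_rpow (by norm_num) (by norm_num)]
        norm_num
    _ = _ := two_rpow_neg_one_div_four_mul_beta_eq
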